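/- arXiv:2604.17995 — 5 statements merged into one kernel-verified Lean document; each statement's English description precedes it below -/
import Mathlib

section
/- Let N ≥ 2 be an integer, let v_nom > 0, 0 < κ < v_nom, and d_eq ∈ ℝ. Let s_1, …, s_N : ℝ → ℝ be differentiable functions such that s_1'(t) = v_nom for all t, and for each i = 2, …, N, s_i'(t) = v_nom − κ·tanh(Δ_i(t)), where Δ_i(t) = s_i(t) − s_{i−1}(t) − d_eq. Then for every i = 2, …, N, the spacing error Δ_i(t) tends to 0 as t → ∞. -/
open Real Filter

private lemma tanh_lt_tanh_of_lt {a b : ℝ} (h : a < b) : Real.tanh a < Real.tanh b := by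
  rw [Real.tanh_eq_sinh_div_cosh, Real.tanh_eq_sinh_div_cosh,
    div_lt_div_iff₀ (Real.cosh_pos a) (Real.cosh_pos b)]
  have hs : 0 < Real.sinh (b - a) := Real.sinh_pos_iff.mpr (sub_pos.mpr h)
  rw [Real.sinh_sub] at hs
  linarith [mul_comm (Real.sinh a) (Real.cosh b)]

private lemma tanh_pos_of_pos {a : ℝ} (h : 0 < a) : 0 < Real.tanh a := by
  simpa using tanh_lt_tanh_of_lt h

/-- One-sided eventual bound for the perturbed scalar ODE f' = -κ tanh f + g, g → 0. -/
private lemma eventually_le_of_ode (κ : ℝ) (hκ : 0 < κ) (f g : ℝ → ℝ)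
    (hf : Differentiable ℝ f)
    (hder : ∀ t, deriv f t = -(κ * Real.tanh (f t)) + g t)
    (hg : Tendsto g atTop (nhds 0)) (ε : ℝ) (hε : 0 < ε) :
    ∀ᶠ t in atTop, f t ≤ ε := by
  set c : ℝ := κ / 2 * Real.tanh ε with hc
  have hc0 : 0 < c := mul_pos (by linarith) (tanh_pos_of_pos hε)
  obtain ⟨T, hT⟩ := (Metric.tendsto_atTop.mp hg c hc0)
  have hgbd : ∀ t, T ≤ t → |g t| < c := by
    intro t ht; simpa [Real.dist_eq] using hT t ht
  -- derivative is at most -c where f exceeds ε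
  have hderneg : ∀ t, T ≤ t → ε ≤ f t → deriv f t ≤ -c := by
    intro t ht hft
    have h1 : Real.tanh ε ≤ Real.tanh (f t) := by
      rcases eq_or_lt_of_le hft with h | h
      · rw [h]
      · exact (tanh_lt_tanh_of_lt h).le
    have h2 := (abs_lt.mp (hgbd t ht)).2
    have : deriv f t = -(κ * Real.tanh (f t)) + g t := hder t
    have hκt : κ * Real.tanh ε ≤ κ * Real.tanh (f t) :=
      mul_le_mul_of_nonneg_left h1 hκ.le
    rw [this]
    have : c = κ / 2 * Real.tanh ε := hc
    nlinarith [tanh_pos_of_pos hε]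
  have hcont : Continuous f := hf.continuous
  -- Claim B : f reaches the region {f ≤ ε}
  have reach : ∃ t0, T ≤ t0 ∧ f t0 ≤ ε := by
    by_contra h
    push_neg at h
    have hfgt : ∀ t, T ≤ t → ε < f t := fun t ht => h t ht
    obtain ⟨X, hX⟩ : ∃ X, X = T + (f T - ε) / c + 1 := ⟨_, rfl⟩
    have h1 : ε < f T := hfgt T le_rfl
    have hq : 0 ≤ (f T - ε) / c := div_nonneg (by linarith) hc0.le
    have hTX : T ≤ X := by rw [hX]; linarith
    -- h(t) = f t + c t is antitone on [T, X]
    have hanti : AntitoneOn (fun t => f t + c * t) (Set.Icc T X) := by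
      apply antitoneOn_of_deriv_nonpos (convex_Icc T X)
      · exact (hcont.add (continuous_const.mul continuous_id)).continuousOn
      · intro x _
        exact ((hf x).add (by fun_prop)).differentiableWithinAt
      · intro x hx
        rw [interior_Icc] at hx
        have hdx : deriv (fun t => f t + c * t) x = deriv f x + c := by
          have h := ((hf x).hasDerivAt.add ((hasDerivAt_id x).const_mul c)).deriv
          simp at h; exact h
        rw [hdx]
        have := hderneg x hx.1.le (hfgt x hx.1.le).le
        linarith
    have := hanti (Set.left_mem_Icc.mpr hTX) (Set.right_mem_Icc.mpr hTX) hTX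
    simp only at this
    -- f X + c X ≤ f T + c T
    have hfX : f X ≤ f T - c * (X - T) := by linarith
    have hXT : c * (X - T) = f T - ε + c := by
      have e : c * ((f T - ε) / c) = f T - ε := by field_simp [hc0.ne']
      rw [hX]; linear_combination e
    have : f X ≤ ε - c := by rw [hXT] at hfX; linarith
    have := hfgt X hTX
    linarith
  obtain ⟨t0, ht0T, ht0⟩ := reach
  -- Claim A : the region {f ≤ ε} is invariant after t0
  rw [eventually_atTop]
  refine ⟨t0, fun t1 ht1 => ?_⟩
  by_contra hcon
  push_neg at hcon
  set A : Set ℝ := Set.Icc t0 t1 ∩ f ⁻¹' Set.Iic ε with hA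
  have hAne : A.Nonempty := ⟨t0, Set.left_mem_Icc.mpr ht1, ht0⟩
  have hAcomp : IsCompact A :=
    (isCompact_Icc).inter_right (isClosed_Iic.preimage hcont)
  obtain ⟨τ, hτA, hτub⟩ : ∃ τ ∈ A, ∀ x ∈ A, x ≤ τ :=
    ⟨sSup A, hAcomp.sSup_mem hAne, fun x hx => le_csSup hAcomp.bddAbove hx⟩
  have hτε : f τ ≤ ε := hτA.2
  have hττ1 : τ ≤ t1 := hτA.1.2
  have hτlt : τ < t1 := lt_of_le_of_ne hττ1 (by intro h; rw [h] at hτε; linarith)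
  have hτ0 : t0 ≤ τ := hτA.1.1
  have hgt : ∀ x, τ < x → x ≤ t1 → ε < f x := by
    intro x hx1 hx2
    by_contra hx
    push_neg at hx
    have : x ∈ A := ⟨⟨le_trans hτ0 hx1.le, hx2⟩, hx⟩
    exact absurd (hτub x this) (not_le.mpr hx1)
  have hstrict : StrictAntiOn f (Set.Icc τ t1) := by
    apply strictAntiOn_of_deriv_neg (convex_Icc τ t1) hcont.continuousOn
    intro x hx
    rw [interior_Icc] at hx
    have hεx : ε < f x := hgt x hx.1 hx.2.le
    have := hderneg x (le_trans ht0T (le_trans hτ0 hx.1.le)) hεx.le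
    linarith
  have := hstrict (Set.left_mem_Icc.mpr hττ1) (Set.right_mem_Icc.mpr hττ1) hτlt
  linarith

/-- Convergence to 0 for the perturbed scalar ODE f' = -κ tanh f + g with g → 0. -/
private lemma tendsto_zero_of_ode (κ : ℝ) (hκ : 0 < κ) (f g : ℝ → ℝ)
    (hf : Differentiable ℝ f)
    (hder : ∀ t, deriv f t = -(κ * Real.tanh (f t)) + g t)
    (hg : Tendsto g atTop (nhds 0)) :
    Tendsto f atTop (nhds 0) := by
  rw [Metric.tendsto_atTop]
  intro ε hε
  have h1 := eventually_le_of_ode κ hκ f g hf hder hg (ε / 2) (by linarith)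
  have hderneg : ∀ t, deriv (fun u => -f u) t
      = -(κ * Real.tanh ((fun u => -f u) t)) + (fun u => -g u) t := by
    intro t
    rw [deriv.fun_neg, hder t]
    simp [Real.tanh_neg]
    ring
  have hgneg : Tendsto (fun u => -g u) atTop (nhds 0) := by
    simpa using hg.neg
  have h2 := eventually_le_of_ode κ hκ (fun u => -f u) (fun u => -g u)
    hf.neg hderneg hgneg (ε / 2) (by linarith)
  obtain ⟨T, hTt⟩ := eventually_atTop.mp (h1.and h2)
  refine ⟨T, fun t ht => ?_⟩
  obtain ⟨hu, hl⟩ := hTt t ht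
  rw [Real.dist_eq, sub_zero, abs_lt]
  constructor <;> linarith

/-- Proposition 2: under the predecessor-following longitudinal velocity control law,
all inter-UAV spacing errors converge to zero. -/
theorem equispacing_convergence
    (N : ℕ) (hN : 2 ≤ N)
    (v_nom κ d_eq : ℝ) (hv : 0 < v_nom) (hκ0 : 0 < κ) (hκ : κ < v_nom)
    (s : ℕ → ℝ → ℝ)
    (hdiff : ∀ i, 1 ≤ i → i ≤ N → Differentiable ℝ (s i))
    (h1 : ∀ t, deriv (s 1) t = v_nom)
    (hi : ∀ i, 2 ≤ i → i ≤ N → ∀ t,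
      deriv (s i) t = v_nom - κ * Real.tanh (s i t - s (i - 1) t - d_eq)) :
    ∀ i, 2 ≤ i → i ≤ N →
      Tendsto (fun t => s i t - s (i - 1) t - d_eq) atTop (nhds 0) := by
  intro i hi2
  induction i, hi2 using Nat.le_induction with
  | base =>
    intro hiN
    apply tendsto_zero_of_ode κ hκ0 _ (fun _ => (0 : ℝ))
    · exact ((hdiff 2 (by norm_num) hiN).sub (hdiff 1 (by norm_num) (by omega))).sub_const _
    · intro t
      have hd : deriv (fun u => s 2 u - s 1 u - d_eq) t = deriv (s 2) t - deriv (s 1) t := by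
        rw [deriv_sub_const, deriv_fun_sub (hdiff 2 (by norm_num) hiN t)
          (hdiff 1 (by norm_num) (by omega) t)]
      rw [hd, hi 2 le_rfl hiN t, h1 t]
      norm_num
    · exact tendsto_const_nhds
  | succ n hn ih =>
    intro hiN
    simp only [Nat.add_sub_cancel]
    have hnN : n ≤ N := by omega
    have hprev : Tendsto (fun t => s n t - s (n - 1) t - d_eq) atTop (nhds 0) :=
      ih hnN
    have hdn : Differentiable ℝ (s n) := hdiff n (by omega) hnN
    have hdn1 : Differentiable ℝ (s (n + 1)) := hdiff (n + 1) (by omega) hiN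
    apply tendsto_zero_of_ode κ hκ0 _
      (fun t => κ * Real.tanh (s n t - s (n - 1) t - d_eq))
    · exact (hdn1.sub hdn).sub_const _
    · intro t
      have hd : deriv (fun u => s (n + 1) u - s n u - d_eq) t
          = deriv (s (n + 1)) t - deriv (s n) t := by
        rw [deriv_sub_const, deriv_fun_sub (hdn1 t) (hdn t)]
      rw [hd, hi (n + 1) (by omega) hiN t, hi n hn hnN t]
      simp only [Nat.add_sub_cancel]
      ring
    · have hcont : Continuous Real.tanh := by
        have h : Real.tanh = fun x => Real.sinh x / Real.cosh x := by
          funext x; exact Real.tanh_eq_sinh_div_cosh x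
        rw [h]
        exact Real.continuous_sinh.div Real.continuous_cosh fun x => (Real.cosh_pos x).ne'
      have hmt : Tendsto (fun x : ℝ => κ * Real.tanh x) (nhds 0) (nhds (κ * Real.tanh 0)) :=
        (continuous_const.mul hcont).tendsto 0
      have := hmt.comp hprev
      simpa [Function.comp_def, Real.tanh_zero] using this
end

section
/- Let κ > 0 and let Δ : ℝ → ℝ be a differentiable function satisfying Δ'(t) = −κ·tanh(Δ(t)) for all t. Then Δ(t) tends to 0 as t → ∞. -/
open Real Filter

/-- The scalar tanh-feedback spacing-error dynamics drive the error to zero. -/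
theorem tanh_feedback_convergence
    (κ : ℝ) (hκ : 0 < κ)
    (Δ : ℝ → ℝ) (hΔ : Differentiable ℝ Δ)
    (hode : ∀ t, deriv Δ t = -κ * Real.tanh (Δ t)) :
    Tendsto Δ atTop (nhds 0) := by
  set y : ℝ → ℝ := fun t => Real.sinh (Δ t) with hy_def
  have hy : ∀ t, HasDerivAt y (-κ * y t) t := by
    intro t
    have h1 : HasDerivAt Δ (-κ * Real.tanh (Δ t)) t := by
      rw [← hode t]; exact (hΔ t).hasDerivAt
    have h2 := (Real.hasDerivAt_sinh (Δ t)).comp t h1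
    refine h2.congr_deriv ?_
    rw [Real.tanh_eq_sinh_div_cosh]
    field_simp [(Real.cosh_pos (Δ t)).ne', hy_def]
    rfl
  -- g t = y t * exp (κ t) is constant
  set g : ℝ → ℝ := fun t => y t * Real.exp (κ * t) with hg_def
  have hg : ∀ t, HasDerivAt g 0 t := by
    intro t
    have he : HasDerivAt (fun t => Real.exp (κ * t)) (κ * Real.exp (κ * t)) t := by
      have := (Real.hasDerivAt_exp (κ * t)).comp t ((hasDerivAt_id t).const_mul κ)
      exact this.congr_deriv (by ring)
    have := (hy t).mul he
    exact this.congr_deriv (by ring)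
  have hgconst : ∀ t, g t = g 0 := by
    intro t
    exact is_const_of_deriv_eq_zero (fun s => (hg s).differentiableAt)
      (fun s => (hg s).deriv) t 0
  have hyeq : ∀ t, y t = y 0 * Real.exp (-(κ * t)) := by
    intro t
    have := hgconst t
    rw [hg_def] at this
    have h := congrArg (fun z => z * Real.exp (-(κ * t))) this
    simpa [hg_def, mul_assoc, ← Real.exp_add] using h
  have hytend : Tendsto y atTop (nhds 0) := by
    rw [funext hyeq]
    have h1 : Tendsto (fun t : ℝ => -(κ * t)) atTop atBot := by
      apply tendsto_neg_atBot_iff.mpr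
      exact Tendsto.const_mul_atTop hκ tendsto_id
    have h2 : Tendsto (fun t : ℝ => Real.exp (-(κ * t))) atTop (nhds 0) :=
      Real.tendsto_exp_atBot.comp h1
    simpa using h2.const_mul (y 0)
  have hΔeq : ∀ t, Δ t = Real.arsinh (y t) := fun t => (Real.arsinh_sinh (Δ t)).symm
  rw [funext hΔeq]
  have := (Real.continuous_arsinh.tendsto 0).comp hytend
  rw [Real.arsinh_zero] at this
  exact this
end

section
/- Let N ≥ 2 and let Δ_1, …, Δ_N be real numbers with Δ_1 = 0. If Δ_i·(tanh(Δ_i) − tanh(Δ_{i−1})) = 0 for every i = 2, …, N, then Δ_i = 0 for every i = 1, …, N. -/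
open Real

lemma tanh_eq_zero_iff' (x : ℝ) : Real.tanh x = 0 ↔ x = 0 := by
  constructor
  · intro hx
    rw [Real.tanh_eq_sinh_div_cosh, div_eq_zero_iff] at hx
    rcases hx with h0 | h0
    · exact Real.sinh_eq_zero.mp h0
    · exact absurd h0 (Real.cosh_pos x).ne'
  · intro hx; simp [hx, Real.tanh_zero]

/-- LaSalle invariant-set characterization: if Δ₁ = 0 and
Δᵢ (tanh Δᵢ - tanh Δᵢ₋₁) = 0 for all i = 2, …, N, then all Δᵢ vanish. -/
theorem invariant_set_is_origin
    (N : ℕ) (hN : 2 ≤ N)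
    (Δ : ℕ → ℝ)
    (hΔ1 : Δ 1 = 0)
    (h : ∀ i, 2 ≤ i → i ≤ N →
      Δ i * (Real.tanh (Δ i) - Real.tanh (Δ (i - 1))) = 0) :
    ∀ i, 1 ≤ i → i ≤ N → Δ i = 0 := by
  intro i hi1 hiN
  induction i with
  | zero => omega
  | succ n ih =>
    rcases Nat.eq_or_lt_of_le hi1 with h1 | h1
    · simpa [← h1] using hΔ1
    · have hn1 : 1 ≤ n := by omega
      have hnN : n ≤ N := by omega
      have hprev : Δ n = 0 := ih hn1 hnN
      have hh := h (n + 1) (by omega) hiN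
      simp only [Nat.add_sub_cancel, hprev, Real.tanh_zero, sub_zero] at hh
      rcases mul_eq_zero.mp hh with h0 | h0
      · exact h0
      · exact (tanh_eq_zero_iff' _).mp h0
end

section
/- Let v > 0 and let d, φ_i, φ_j, Ω : ℝ → ℝ be functions with d differentiable, d(t) > 0, φ_i and φ_j differentiable, satisfying d'(t) = v·(cos φ_j(t) − cos φ_i(t)), φ_i'(t) = (v/d(t))·(sin φ_i(t) − sin φ_j(t)) + Ω(t)·sin φ_i(t), and φ_j'(t) = (v/d(t))·(sin φ_i(t) − sin φ_j(t)) − Ω(t)·sin φ_j(t) for all t. Then d' is differentiable and d''(t) = (v²/d(t))·(sin φ_i(t) − sin φ_j(t))² + v·Ω(t)·(sin²φ_i(t) + sin²φ_j(t)) for all t. -/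
open Real

/-- Second-derivative-of-range computation under the rotational repulsion law:
d'' = (v²/d)(sin φᵢ - sin φⱼ)² + v Ω (sin²φᵢ + sin²φⱼ). -/
theorem range_second_derivative
    (v : ℝ) (hv : 0 < v)
    (d φi φj Ω : ℝ → ℝ)
    (hd : Differentiable ℝ d) (hdpos : ∀ t, 0 < d t)
    (hφi : Differentiable ℝ φi) (hφj : Differentiable ℝ φj)
    (hd' : ∀ t, deriv d t = v * (Real.cos (φj t) - Real.cos (φi t)))
    (hφi' : ∀ t, deriv φi t =
      (v / d t) * (Real.sin (φi t) - Real.sin (φj t)) + Ω t * Real.sin (φi t))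
    (hφj' : ∀ t, deriv φj t =
      (v / d t) * (Real.sin (φi t) - Real.sin (φj t)) - Ω t * Real.sin (φj t)) :
    Differentiable ℝ (deriv d) ∧
    ∀ t, deriv (deriv d) t =
      (v ^ 2 / d t) * (Real.sin (φi t) - Real.sin (φj t)) ^ 2 +
        v * Ω t * ((Real.sin (φi t)) ^ 2 + (Real.sin (φj t)) ^ 2) := by
  have hEq : deriv d = fun t => v * (Real.cos (φj t) - Real.cos (φi t)) := funext hd'
  rw [hEq]
  constructor
  · exact (hφj.cos.sub hφi.cos).const_mul v
  · intro t
    have h1 : HasDerivAt φi (deriv φi t) t := (hφi t).hasDerivAt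
    have h2 : HasDerivAt φj (deriv φj t) t := (hφj t).hasDerivAt
    have h : HasDerivAt (fun t => v * (Real.cos (φj t) - Real.cos (φi t)))
        (v * ((-Real.sin (φj t) * deriv φj t) - (-Real.sin (φi t) * deriv φi t))) t :=
      (h2.cos.sub h1.cos).const_mul v
    rw [h.deriv, hφi' t, hφj' t]
    have hD : d t ≠ 0 := (hdpos t).ne'
    field_simp
    ring
end

section
/- Let v > 0, R_s > 0, and 0 < d_safe < R_s, and suppose k_r > 2·v·R_s/(R_s − d_safe). Then for all real numbers a, b with a² + b² > 0, one has (b − a)² ≤ 2·(a² + b²), and consequently R_s·(1 − v·(b − a)²/(k_r·(a² + b²))) > d_safe. -/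
/-- Uniform sufficient gain condition: since (b - a)² ≤ 2(a² + b²) for all a, b,
the gain bound k_r > 2 v R_s / (R_s - d_safe) guarantees d* > d_safe for all
lead-angle geometries. -/
theorem uniform_gain_condition
    (v R_s d_safe k_r : ℝ)
    (hv : 0 < v) (hR : 0 < R_s) (hds : 0 < d_safe) (hdR : d_safe < R_s)
    (hkr : k_r > 2 * v * R_s / (R_s - d_safe)) :
    ∀ a b : ℝ, 0 < a ^ 2 + b ^ 2 →
      (b - a) ^ 2 ≤ 2 * (a ^ 2 + b ^ 2) ∧
      R_s * (1 - v * (b - a) ^ 2 / (k_r * (a ^ 2 + b ^ 2))) > d_safe := by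
  intro a b hS
  have hsub : 0 < R_s - d_safe := by linarith
  have hkr0 : 0 < k_r := lt_trans (div_pos (by positivity) hsub) hkr
  have hineq : (b - a) ^ 2 ≤ 2 * (a ^ 2 + b ^ 2) := by nlinarith [sq_nonneg (a + b)]
  refine ⟨hineq, ?_⟩
  have h1 : v * (b - a) ^ 2 / (k_r * (a ^ 2 + b ^ 2)) ≤ 2 * v / k_r := by
    rw [div_le_div_iff₀ (by positivity) hkr0]
    nlinarith [mul_le_mul_of_nonneg_left hineq (by positivity : (0:ℝ) ≤ v * k_r)]
  have h2 : k_r * (R_s - d_safe) > 2 * v * R_s := by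
    have := (div_lt_iff₀ hsub).mp hkr
    linarith
  have h3 : R_s * (1 - 2 * v / k_r) > d_safe := by
    rw [gt_iff_lt, ← sub_pos]
    have : R_s * (1 - 2 * v / k_r) - d_safe = (k_r * (R_s - d_safe) - 2 * v * R_s) / k_r := by
      field_simp; ring
    rw [this]
    exact div_pos (by linarith) hkr0
  nlinarith [mul_le_mul_of_nonneg_left h1 hR.le]
end
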